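/- Let Γ be the subgroup of SO(12) generated by the diagonal matrices γ₁ = diag(−I₂, −I₂, I₂, I₂, I₂, I₂), γ₂ = diag(I₂, I₂, −I₂, −I₂, I₂, I₂), γ₃ = diag(I₂, I₂, I₂, I₂, −I₂, −I₂), and let Γ' be the subgroup of SO(12) generated by γ'₁ = diag(−I₂, −I₂, I₂, I₂, I₂, I₂), γ'₂ = diag(−I₂, I₂, −I₂, I₂, I₂, I₂), γ'₃ = diag(−I₂, −I₂, −I₂, −I₂, −I₂, −I₂), where I₂ is the 2×2 identity matrix. Then Γ and Γ' are almost conjugate in SO(12): there exists a bijection φ : Γ → Γ' such that for every g ∈ Γ, the matrices g and φ(g) are conjugate in SO(12). -/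

import Mathlib

/-!
Both groups are images of `(ZMod 2)³` under `v ↦ diag((-1)^(v ᵥ* P))`, where the rows of the
`3 × 12` matrix `P` over `ZMod 2` mark the `-1` entries of the generators; since these rows are
linearly independent, this parametrises each group bijectively. Two diagonal matrices with the
same multiset of diagonal entries are conjugate by a permutation matrix, and, after composing with
a reflection in one coordinate (which commutes with all diagonal matrices), by an element of
`SO(n)`. Finally `Γ` and `Γ'` each consist of the identity, three elements with four entries `-1`,
three with eight and one with twelve, so matching elements of equal spectrum gives `φ`.
-/

open Matrix Multiplicative

theorem Equiv.exists_comp_eq_of_map_univ_eq {α β γ : Type*} [Fintype α] [Fintype β]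
    {f : α → γ} {g : β → γ} (h : Finset.univ.val.map f = Finset.univ.val.map g) :
    ∃ e : α ≃ β, ∀ a, g (e a) = f a := by
  classical
  have hcard (c : γ) : Fintype.card {a // f a = c} = Fintype.card {b // g b = c} := by
    have := congrArg (Multiset.count c) h
    simp only [Multiset.count_map, eq_comm (a := c)] at this
    simpa [Fintype.card_subtype, Finset.card_def] using this
  exact ⟨.ofFiberEquiv fun c => Fintype.equivOfCardEq (hcard c), Equiv.ofFiberEquiv_map _⟩

namespace Matrix

variable {n R : Type*} [Fintype n] [DecidableEq n] [CommRing R]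

theorem permMatrix_mul_diagonal (σ : Equiv.Perm n) (d : n → R) :
    σ.permMatrix R * diagonal d = diagonal (d ∘ σ) * σ.permMatrix R := by
  ext i j
  simp only [mul_diagonal, diagonal_mul, PEquiv.toMatrix_apply, Equiv.toPEquiv_apply,
    Option.mem_def, Option.some.injEq, Function.comp_apply]
  split_ifs with h <;> simp [h]

theorem permMatrix_mem_orthogonalGroup (σ : Equiv.Perm n) :
    σ.permMatrix R ∈ orthogonalGroup n R := by
  rw [mem_orthogonalGroup_iff, transpose_permMatrix, ← permMatrix_mul, inv_mul_cancel,
    permMatrix_one]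

theorem exists_mem_specialOrthogonalGroup_conj_diagonal_comp [Nonempty n] (d : n → R)
    (σ : Equiv.Perm n) :
    ∃ h ∈ specialOrthogonalGroup n R, h * diagonal d * h⁻¹ = diagonal (d ∘ σ) := by
  suffices ∃ h ∈ specialOrthogonalGroup n R, h * diagonal d = diagonal (d ∘ σ) * h by
    obtain ⟨h, hSO, hd⟩ := this
    refine ⟨h, hSO, ?_⟩
    rw [hd, mul_nonsing_inv_cancel_right _ _ (by simp [(mem_specialOrthogonalGroup_iff.mp hSO).2])]
  obtain ⟨i₀⟩ := ‹Nonempty n›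
  let D : Matrix n n R := diagonal (Function.update 1 i₀ (-1))
  have hD : D ∈ orthogonalGroup n R := by
    rw [mem_orthogonalGroup_iff, diagonal_transpose, diagonal_mul_diagonal, ← diagonal_one]
    congr 1
    ext i
    by_cases hi : i = i₀ <;> simp [hi]
  have hDdet : D.det = -1 := by
    simp [D, det_diagonal, Finset.prod_update_of_mem]
  have hDd (d : n → R) : D * diagonal d = diagonal d * D := by
    simp only [D, diagonal_mul_diagonal, mul_comm]
  rcases Int.units_eq_one_or (Equiv.Perm.sign σ) with hσ | hσ
  · exact ⟨σ.permMatrix R, ⟨permMatrix_mem_orthogonalGroup σ, by simp [hσ]⟩,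
      permMatrix_mul_diagonal σ d⟩
  · refine ⟨D * σ.permMatrix R, ⟨mul_mem hD (permMatrix_mem_orthogonalGroup σ), ?_⟩, ?_⟩
    · simp [hDdet, hσ]
    · rw [mul_assoc, permMatrix_mul_diagonal, ← mul_assoc, hDd, mul_assoc]

theorem exists_mem_specialOrthogonalGroup_conj_diagonal [Nonempty n] {d d' : n → R}
    (h : Finset.univ.val.map d = Finset.univ.val.map d') :
    ∃ g ∈ specialOrthogonalGroup n R, g * diagonal d * g⁻¹ = diagonal d' := by
  obtain ⟨σ, hσ⟩ := Equiv.exists_comp_eq_of_map_univ_eq h.symm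
  simpa [show d ∘ σ = d' from funext hσ] using
    exists_mem_specialOrthogonalGroup_conj_diagonal_comp d σ

variable (R) in
def signDiagonal : Multiplicative (n → ZMod 2) →* Matrix n n R where
  toFun w := diagonal fun i => (((-1 : ℤˣ) ^ w.toAdd i : ℤˣ) : R)
  map_one' := by simp
  map_mul' v w := by simp [uzpow_add, diagonal_mul_diagonal]

theorem signDiagonal_ofAdd (w : n → ZMod 2) :
    signDiagonal R (ofAdd w) = diagonal fun i => (((-1 : ℤˣ) ^ w i : ℤˣ) : R) := rfl

theorem signDiagonal_injective (hR : (-1 : R) ≠ 1) :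
    Function.Injective (signDiagonal R (n := n)) := by
  intro v w h
  ext i
  have hi := congrFun (diagonal_injective h) i
  have h01 : ∀ a : ZMod 2, a = 0 ∨ a = 1 := by decide
  rcases h01 (toAdd v i) with ha | ha <;> rcases h01 (toAdd w i) with hb | hb <;>
    simp_all [eq_comm]

theorem exists_mem_specialOrthogonalGroup_conj_signDiagonal [Nonempty n] {w w' : n → ZMod 2}
    (h : Finset.univ.val.map w = Finset.univ.val.map w') :
    ∃ g ∈ specialOrthogonalGroup n R,
      g * signDiagonal R (ofAdd w) * g⁻¹ = signDiagonal R (ofAdd w') := by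
  have hd := congrArg (Multiset.map fun a : ZMod 2 => (((-1 : ℤˣ) ^ a : ℤˣ) : R)) h
  simp only [Multiset.map_map] at hd
  exact exists_mem_specialOrthogonalGroup_conj_diagonal hd

variable {ι : Type*} [Fintype ι] [DecidableEq ι]

theorem coe_closure_range_signDiagonal (P : Matrix ι n (ZMod 2)) :
    (Submonoid.closure (Set.range fun j => signDiagonal R (ofAdd (P j))) : Set (Matrix n n R)) =
      Set.range fun v : ι → ZMod 2 => signDiagonal R (ofAdd (v ᵥ* P)) := by
  apply subset_antisymm
  · let ψ := (signDiagonal R).comp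
      (AddMonoidHom.toMultiplicative (vecMulLinear P).toAddMonoidHom)
    have : Submonoid.closure (Set.range fun j => signDiagonal R (ofAdd (P j))) ≤
        MonoidHom.mrange ψ :=
      Submonoid.closure_le.mpr <| by
        rintro _ ⟨j, rfl⟩
        exact ⟨ofAdd (Pi.single j 1), by simp [ψ, Matrix.row]⟩
    exact this
  · rintro _ ⟨v, rfl⟩
    have hv : v ᵥ* P = ∑ j, (v j).val • P j := by
      simp [vecMul_eq_sum, ← Nat.cast_smul_eq_nsmul (ZMod 2)]
    have hgen : Submonoid.closure (Set.range fun j => ofAdd (P j)) ≤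
        (Submonoid.closure (Set.range fun j => signDiagonal R (ofAdd (P j)))).comap
          (signDiagonal R) :=
      Submonoid.closure_le.mpr <| Set.range_subset_iff.mpr fun j =>
        Submonoid.subset_closure ⟨j, rfl⟩
    apply hgen
    rw [hv, ofAdd_sum]
    exact Submonoid.prod_mem _ fun j _ => by
      rw [ofAdd_nsmul]; exact pow_mem (Submonoid.subset_closure (Set.mem_range_self j)) _

theorem exists_equiv_closure_range_signDiagonal (hR : (-1 : R) ≠ 1) {P : Matrix ι n (ZMod 2)}
    (hP : Function.Injective fun v => v ᵥ* P) :
    ∃ e : (ι → ZMod 2) ≃ Submonoid.closure (Set.range fun j => signDiagonal R (ofAdd (P j))),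
      ∀ v, (e v : Matrix n n R) = signDiagonal R (ofAdd (v ᵥ* P)) :=
  ⟨(Equiv.ofInjective _ ((signDiagonal_injective hR).comp (ofAdd.injective.comp hP))).trans
    (Equiv.setCongr (coe_closure_range_signDiagonal P).symm), fun _ => rfl⟩

theorem range_vecCons_three {α : Type*} (a b c : α) : Set.range ![a, b, c] = {a, b, c} := by
  rw [range_cons, range_cons_cons_empty, Set.singleton_union]

end Matrix

def generatorsΓ : Matrix (Fin 3) (Fin 12) (ZMod 2) :=
  of ![fun i => if (i : ℕ) < 4 then 1 else 0,
    fun i => if 4 ≤ (i : ℕ) ∧ (i : ℕ) < 8 then 1 else 0,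
    fun i => if 8 ≤ (i : ℕ) then 1 else 0]

def generatorsΓ' : Matrix (Fin 3) (Fin 12) (ZMod 2) :=
  of ![fun i => if (i : ℕ) < 4 then 1 else 0,
    fun i => if (i : ℕ) < 2 ∨ (4 ≤ (i : ℕ) ∧ (i : ℕ) < 6) then 1 else 0, fun _ => 1]

theorem vecMul_generatorsΓ_injective : Function.Injective fun v => v ᵥ* generatorsΓ := by
  decide

theorem vecMul_generatorsΓ'_injective : Function.Injective fun v => v ᵥ* generatorsΓ' := by
  decide

theorem map_univ_map_vecMul_generatorsΓ_eq :
    Finset.univ.val.map (fun v => Finset.univ.val.map (v ᵥ* generatorsΓ)) =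
      Finset.univ.val.map (fun v => Finset.univ.val.map (v ᵥ* generatorsΓ')) := by
  decide

/-- **Almost conjugate non-cyclic subgroups of `SO(12)`.**
Let `Γ = ⟨γ₁, γ₂, γ₃⟩` and `Γ' = ⟨γ'₁, γ'₂, γ'₃⟩` be the elementary abelian subgroups of
`SO(12)` generated by the indicated block-diagonal matrices with `±I₂` blocks (since every
element is an involution, the generated subgroups agree with the generated submonoids).
Then `Γ` and `Γ'` are almost conjugate in `SO(12)`: there is a bijection `φ : Γ → Γ'` such
that `g` and `φ(g)` are conjugate by an element of `SO(12)` for every `g ∈ Γ`. -/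
theorem almost_conjugate_SO12
    (γ₁ γ₂ γ₃ γ₁' γ₂' γ₃' : Matrix (Fin 12) (Fin 12) ℝ)
    (h1 : γ₁ = Matrix.diagonal fun i : Fin 12 => if (i : ℕ) < 4 then -1 else 1)
    (h2 : γ₂ = Matrix.diagonal fun i : Fin 12 => if 4 ≤ (i : ℕ) ∧ (i : ℕ) < 8 then -1 else 1)
    (h3 : γ₃ = Matrix.diagonal fun i : Fin 12 => if 8 ≤ (i : ℕ) then -1 else 1)
    (h1' : γ₁' = Matrix.diagonal fun i : Fin 12 => if (i : ℕ) < 4 then -1 else 1)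
    (h2' : γ₂' = Matrix.diagonal fun i : Fin 12 =>
        if (i : ℕ) < 2 ∨ (4 ≤ (i : ℕ) ∧ (i : ℕ) < 6) then -1 else 1)
    (h3' : γ₃' = Matrix.diagonal fun i : Fin 12 => (-1 : ℝ)) :
    ∃ φ : (Submonoid.closure {γ₁, γ₂, γ₃} : Submonoid (Matrix (Fin 12) (Fin 12) ℝ)) ≃
        (Submonoid.closure {γ₁', γ₂', γ₃'} : Submonoid (Matrix (Fin 12) (Fin 12) ℝ)),
      ∀ x : (Submonoid.closure {γ₁, γ₂, γ₃} : Submonoid (Matrix (Fin 12) (Fin 12) ℝ)),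
        ∃ h : Matrix (Fin 12) (Fin 12) ℝ,
          h ∈ Matrix.specialOrthogonalGroup (Fin 12) ℝ ∧
            h * (x : Matrix (Fin 12) (Fin 12) ℝ) * h⁻¹ = (φ x : Matrix (Fin 12) (Fin 12) ℝ) := by
  have hgen : (fun j => signDiagonal ℝ (ofAdd (generatorsΓ j))) = ![γ₁, γ₂, γ₃] ∧
      (fun j => signDiagonal ℝ (ofAdd (generatorsΓ' j))) = ![γ₁', γ₂', γ₃'] := by
    subst h1 h2 h3 h1' h2' h3'
    constructor <;> funext j <;> fin_cases j <;>
      simp [generatorsΓ, generatorsΓ', signDiagonal_ofAdd, apply_ite Units.val,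
        apply_ite Int.cast]
  rw [← range_vecCons_three, ← range_vecCons_three, ← hgen.1, ← hgen.2]
  obtain ⟨e, he⟩ :=
    exists_equiv_closure_range_signDiagonal (R := ℝ) (by norm_num) vecMul_generatorsΓ_injective
  obtain ⟨e', he'⟩ :=
    exists_equiv_closure_range_signDiagonal (R := ℝ) (by norm_num) vecMul_generatorsΓ'_injective
  obtain ⟨m, hm⟩ := Equiv.exists_comp_eq_of_map_univ_eq map_univ_map_vecMul_generatorsΓ_eq
  refine ⟨e.symm.trans (m.trans e'), fun x => ?_⟩
  obtain ⟨v, rfl⟩ := e.surjective x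
  simpa [he, he'] using exists_mem_specialOrthogonalGroup_conj_signDiagonal (hm v).symm
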